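/- arXiv:1111.1084 — 2 statements merged into one kernel-verified Lean document; each statement's English description precedes it below -/
import Mathlib

section
/- An m×n reduced matrix over the polynomial ring K[x₁,…,xₙ] (entry (s,t) being a polynomial in x_t alone) has rank equal to min(m,n); that is, reduced matrices have full rank. -/
/-- An `m × n` matrix `(d s t)` whose `(s,t)` entry is a univariate polynomial in
the variable `x_t` is *reduced* if for each diagonal position `s = t` (with
`s < min m n`), `d s s ≠ 0` and `deg(d s s) > deg(d k s)` for all `k > s`
(with `deg 0 = -∞`). -/
def IsReducedMat {K : Type*} [Field K] {m n : ℕ}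
    (d : Fin m → Fin n → Polynomial K) : Prop :=
  ∀ (s : Fin m) (t : Fin n), (s : ℕ) = (t : ℕ) →
    d s t ≠ 0 ∧ ∀ k : Fin m, (s : ℕ) < (k : ℕ) → (d k t).degree < (d s t).degree

/-!
Column `t` of the leading `r × r` block (`r = min m n`) involves only `x_t`, so in the Leibniz
expansion of its determinant the coefficient of `∏ x_t ^ a_t` is the determinant of the scalar
matrix `(coeff_{a_t} d_{st})`. For `a_t = deg d_{tt}` reducedness makes this scalar matrix upper
triangular with the leading coefficients of the `d_{tt}` on its diagonal, so the block is a
nonsingular minor over the fraction field.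
-/

open Finset

theorem Finsupp.univ_sum_single_apply_of_injective {ι σ M : Type*} [Fintype ι] [AddCommMonoid M]
    {e : ι → σ} (he : Function.Injective e) (p : ι → M) (j : ι) :
    (∑ i, Finsupp.single (e i) (p i)) (e j) = p j := by
  classical
  rw [Finsupp.finsetSum_apply,
    Finset.sum_eq_single j (fun i _ hij => by simp [he.ne hij]) (by simp)]
  simp

namespace MvPolynomial

variable {R σ ι : Type*} [Fintype ι]

section CommSemiring

variable [CommSemiring R]

theorem aeval_X_eq_sum_monomial (i : σ) (f : Polynomial R) :
    Polynomial.aeval (X i : MvPolynomial σ R) f =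
      ∑ k ∈ f.support, monomial (Finsupp.single i k) (f.coeff k) := by
  simp only [Polynomial.aeval_def, Polynomial.eval₂_eq_sum, Polynomial.sum_def, algebraMap_eq,
    C_mul_X_pow_eq_monomial]

theorem coeff_prod_aeval_X {e : ι → σ} (he : Function.Injective e) (f : ι → Polynomial R)
    (a : ι → ℕ) :
    coeff (∑ i, Finsupp.single (e i) (a i)) (∏ i, Polynomial.aeval (X (e i)) (f i)) =
      ∏ i, (f i).coeff (a i) := by
  classical
  have hinj : ∀ p : ι → ℕ, ∑ i, Finsupp.single (e i) (p i) = ∑ i, Finsupp.single (e i) (a i) →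
      p = a := by
    intro p h
    funext j
    simpa [Finsupp.univ_sum_single_apply_of_injective he] using DFunLike.congr_fun h (e j)
  simp_rw [aeval_X_eq_sum_monomial, prod_univ_sum, ← monomial_sum_prod, coeff_sum, coeff_monomial]
  rw [sum_eq_single a]
  · simp
  · intro p _ hp
    simp [hp, hinj p |>.mt]
  · intro ha
    obtain ⟨i, hi⟩ : ∃ i, (f i).coeff (a i) = 0 := by simpa using ha
    rw [if_pos rfl]
    exact prod_eq_zero (mem_univ i) hi

end CommSemiring

variable [CommRing R] [DecidableEq ι] {e : ι → σ}

theorem coeff_det_aeval_X (he : Function.Injective e) (g : Matrix ι ι (Polynomial R))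
    (a : ι → ℕ) :
    coeff (∑ t, Finsupp.single (e t) (a t))
        (Matrix.of fun s t => Polynomial.aeval (X (e t)) (g s t)).det =
      (Matrix.of fun s t => (g s t).coeff (a t)).det := by
  simp only [Matrix.det_apply, coeff_sum, Units.smul_def, coeff_smul, Matrix.of_apply,
    coeff_prod_aeval_X he]

theorem det_aeval_X_ne_zero [LinearOrder ι] [IsDomain R] (he : Function.Injective e)
    (g : Matrix ι ι (Polynomial R)) (hdiag : ∀ t, g t t ≠ 0)
    (hlt : ∀ s t, t < s → (g s t).degree < (g t t).degree) :
    (Matrix.of fun s t => Polynomial.aeval (X (e t) : MvPolynomial σ R) (g s t)).det ≠ 0 := by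
  have htri : (Matrix.of fun s t => (g s t).coeff (g t t).natDegree).IsUpperTriangular :=
    fun s t hts => Polynomial.coeff_eq_zero_of_degree_lt
      ((hlt s t hts).trans_eq (Polynomial.degree_eq_natDegree (hdiag t)))
  intro h
  have hcoeff := coeff_det_aeval_X he g fun t => (g t t).natDegree
  rw [h, coeff_zero, Matrix.det_of_isUpperTriangular htri] at hcoeff
  exact prod_ne_zero_iff.mpr (fun t _ => Polynomial.leadingCoeff_ne_zero.mpr (hdiag t)) hcoeff.symm

end MvPolynomial

theorem Matrix.card_le_rank_map_of_det_submatrix_ne_zero {R F m n ι : Type*} [CommRing R]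
    [Field F] [Fintype n] [Fintype ι] [DecidableEq ι] {f : R →+* F} (hf : Function.Injective f)
    (A : Matrix m n R) (r : ι → m) (c : ι → n) (h : (A.submatrix r c).det ≠ 0) :
    Fintype.card ι ≤ (A.map f).rank := by
  have hdet : ((A.map f).submatrix r c).det ≠ 0 := by
    rw [Matrix.submatrix_map, ← RingHom.mapMatrix_apply, ← RingHom.map_det]
    exact (map_ne_zero_iff f hf).mpr h
  exact (rank_of_isUnit _ ((isUnit_iff_isUnit_det _).mpr hdet.isUnit)).ge.trans
    (rank_submatrix_le _ r c)

/-- A reduced `m × n` matrix over `K[x₁,…,xₙ]` (entry `(s,t)` being a polynomial in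
`x_t` alone, viewed in `K[x₁,…,xₙ]` via `x ↦ x_t`) has full rank `min m n`,
the rank being computed over the field of rational functions. -/
theorem stmt8 (K : Type*) [Field K] (m n : ℕ)
    (d : Fin m → Fin n → Polynomial K) (hred : IsReducedMat d) :
    (Matrix.of fun (s : Fin m) (t : Fin n) =>
        algebraMap (MvPolynomial (Fin n) K) (FractionRing (MvPolynomial (Fin n) K))
          (Polynomial.aeval (MvPolynomial.X t) (d s t))).rank = min m n := by
  let em : Fin (min m n) → Fin m := Fin.castLE (min_le_left m n)
  let en : Fin (min m n) → Fin n := Fin.castLE (min_le_right m n)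
  have hdet : (Matrix.of fun s t =>
      Polynomial.aeval (MvPolynomial.X (en t)) (d (em s) (en t))).det ≠ 0 :=
    MvPolynomial.det_aeval_X_ne_zero (Fin.castLE_injective _) (.of fun s t => d (em s) (en t))
      (fun t => (hred _ _ rfl).1) (fun s t hts => (hred _ _ rfl).2 _ hts)
  refine le_antisymm (le_min (Matrix.rank_le_height _) (Matrix.rank_le_width _)) ?_
  exact (Fintype.card_fin _).symm.trans_le <|
    Matrix.card_le_rank_map_of_det_submatrix_ne_zero (IsFractionRing.injective _ _) _ em en hdet
end

section
/- Let w₁,…,w_m be vectors over a field K of the form w_i = Σ_{k=0}^{l_i} u_{ik} β_{ik}, where the β_{ik} are fixed vectors in Kⁿ (with β_{i0} = 0 for each i) and the u_{ik} are algebraically independent indeterminates over K. Let M be the m×n matrix with rows w₁,…,w_m over the field K(u_{ik}). For each choice k₁,…,k_m with 1 ≤ k_i ≤ l_i, let M_{k₁,…,k_m} be the m×n matrix with rows β_{1k₁},…,β_{mk_m}. Then rank(M) = max over all choices (k₁,…,k_m) of rank(M_{k₁,…,k_m}). -/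
/-!
By multilinearity of the determinant in the rows, the minor of `M` on rows `i₁,…,i_r` is the
sum over choices `k₁,…,k_r` of `∏_j u_{i_j k_j}` times the same minor of the matrix with rows
`β_{i_j k_j}`; the terms with some `k_j = 0` vanish since `β_{i0} = 0`. Hence a nonzero minor of
`M` yields a nonzero minor of the same size of some `M_{k₁,…,kₘ}`. Conversely `M_{k₁,…,kₘ}` is
the specialization `u_{ik} ↦ δ_{k k_i}` of the polynomial matrix underlying `M`, and a nonzero
minor of a specialization lifts to a nonzero minor of the polynomial matrix, hence of `M`.
-/

theorem exists_linearIndependent_comp_fin {ι F V : Type*} [Field F] [AddCommGroup V]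
    [Module F V] [Finite ι] (v : ι → V) {r : ℕ}
    (hr : Module.finrank F (Submodule.span F (Set.range v)) = r) :
    ∃ f : Fin r → ι, LinearIndependent F (v ∘ f) := by
  cases nonempty_fintype ι
  obtain ⟨κ, a, ha, hspan, hli⟩ := exists_linearIndependent' F v
  have : Fintype κ := Fintype.ofInjective a ha
  have hcard := linearIndependent_iff_card_eq_finrank_span.mp hli
  rw [Set.finrank, hspan, hr] at hcard
  exact ⟨a ∘ (Fintype.equivFinOfCardEq hcard).symm, hli.comp _ (Equiv.injective _)⟩

theorem Function.Injective.exists_pi_comp_eq {α β : Type*} {κ : β → Type*} [∀ b, Nonempty (κ b)]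
    {f : α → β} (hf : Function.Injective f) (x : (a : α) → κ (f a)) :
    ∃ y : (b : β) → κ b, ∀ a, y (f a) = x a := by
  classical
  have hcast : ∀ a a' (e : f a' = f a), e ▸ x a' = x a := by
    rintro a a' e
    obtain rfl := hf e
    rfl
  refine ⟨fun b => if h : ∃ a, f a = b then h.choose_spec ▸ x h.choose else Classical.arbitrary _,
    fun a => ?_⟩
  dsimp only
  rw [dif_pos ⟨a, rfl⟩]
  exact hcast _ _ _

namespace Matrix

variable {m n ι : Type*}

theorem det_of_sum_mul_rows {R : Type*} [CommRing R] [Fintype ι] [DecidableEq ι]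
    {κ : ι → Type*} [∀ i, Fintype (κ i)] (c : (i : ι) → κ i → R) (b : (i : ι) → κ i → ι → R) :
    (of fun i t => ∑ k, c i k * b i k t).det =
      ∑ kk : (i : ι) → κ i, (∏ i, c i (kk i)) * (of fun i t => b i (kk i) t).det := by
  have hrows : (of fun i t => ∑ k, c i k * b i k t) = fun i => ∑ k, c i k • b i k := by
    ext i t
    simp [Finset.sum_apply]
  rw [hrows]
  refine (detRowAlternating.toMultilinearMap.map_sum _).trans (Finset.sum_congr rfl fun kk _ => ?_)
  exact (detRowAlternating.map_smul_univ _ _).trans (smul_eq_mul _ _)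

theorem card_le_rank_of_det_submatrix_ne_zero {R : Type*} [CommRing R] [IsDomain R] [Fintype n]
    [Fintype ι] [DecidableEq ι] (A : Matrix m n R) {f : ι → m} {g : ι → n}
    (h : (A.submatrix f g).det ≠ 0) : Fintype.card ι ≤ A.rank :=
  rank_of_det_ne_zero h ▸ rank_submatrix_le A f g

theorem exists_submatrix_det_ne_zero {F : Type*} [Field F] [Fintype m] [Fintype n]
    (A : Matrix m n F) : ∃ (f : Fin A.rank → m) (g : Fin A.rank → n), (A.submatrix f g).det ≠ 0 := by
  obtain ⟨f, hf⟩ := exists_linearIndependent_comp_fin A.row (rank_eq_finrank_span_row A).symm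
  have hrank : (A.submatrix f id).rank = A.rank := by
    simpa using LinearIndependent.rank_matrix (M := A.submatrix f id) hf
  obtain ⟨g, hg⟩ := exists_linearIndependent_comp_fin (A.submatrix f id).col
    ((rank_eq_finrank_span_cols _).symm.trans hrank)
  exact ⟨f, g, ((isUnit_iff_isUnit_det _).mp (linearIndependent_cols_iff_isUnit.mp hg)).ne_zero⟩

theorem rank_map_le_rank_map {R F F' : Type*} [CommRing R] [Field F] [Field F'] [Fintype m]
    [Fintype n] (A : Matrix m n R) (φ : R →+* F) (ψ : R →+* F') (hψ : Function.Injective ψ) :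
    (A.map φ).rank ≤ (A.map ψ).rank := by
  obtain ⟨f, g, hdet⟩ := exists_submatrix_det_ne_zero (A.map φ)
  have hdetA : (A.submatrix f g).det ≠ 0 := fun h =>
    hdet (by rw [submatrix_map, ← RingHom.mapMatrix_apply, ← RingHom.map_det, h, map_zero])
  have hdetψ : ((A.map ψ).submatrix f g).det ≠ 0 := by
    rw [submatrix_map, ← RingHom.mapMatrix_apply, ← RingHom.map_det]
    exact (map_ne_zero_iff ψ hψ).mpr hdetA
  simpa using card_le_rank_of_det_submatrix_ne_zero _ hdetψ

theorem rank_of_sum_mul_rows_le_sup {F : Type*} [Field F] [Fintype m] [DecidableEq m] [Fintype n]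
    {κ : m → Type*} [∀ i, Fintype (κ i)] [∀ i, Nonempty (κ i)]
    (c : (i : m) → κ i → F) (b : (i : m) → κ i → n → F) :
    (of fun i t => ∑ k, c i k * b i k t).rank ≤
      Finset.univ.sup fun kk : (i : m) → κ i => (of fun i t => b i (kk i) t).rank := by
  obtain ⟨f, g, hdet⟩ := exists_submatrix_det_ne_zero (of fun i t => ∑ k, c i k * b i k t)
  have hf : Function.Injective f := fun j j' h => by
    by_contra hne
    exact hdet (det_zero_of_row_eq hne (by ext; simp [h]))
  change (of fun j t => ∑ k, c (f j) k * b (f j) k (g t)).det ≠ 0 at hdet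
  rw [det_of_sum_mul_rows] at hdet
  obtain ⟨kk', -, hkk'⟩ := Finset.exists_ne_zero_of_sum_ne_zero hdet
  obtain ⟨kk, hkk⟩ := hf.exists_pi_comp_eq kk'
  have hminor : ((of fun i t => b i (kk i) t).submatrix f g).det ≠ 0 := by
    convert right_ne_zero_of_mul hkk' using 2
    ext j t
    simp [hkk]
  calc _ = Fintype.card (Fin _) := (Fintype.card_fin _).symm
    _ ≤ _ := card_le_rank_of_det_submatrix_ne_zero _ hminor
    _ ≤ _ := Finset.le_sup (f := fun kk : (i : m) → κ i => (of fun i t => b i (kk i) t).rank)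
        (Finset.mem_univ kk)

end Matrix

open MvPolynomial

/-- **Symbolic support matrix rank.**  Let `β i k ∈ Kⁿ` (for `i < m`,
`0 ≤ k ≤ l i`, with `β i 0 = 0`) be fixed vectors and `u i k` algebraically
independent indeterminates over `K`.  Let `M` be the `m × n` matrix with rows
`w i = ∑_k u i k • β i k`, with entries in the rational function field
`K(u i k)`.  Then `rank M` equals the maximum over all choices
`1 ≤ k_i ≤ l i` of the rank (over `K`) of the matrix with rows `β i (k i)`. -/
theorem stmt9 (K : Type*) [Field K] (m n : ℕ) (l : Fin m → ℕ) (hl : ∀ i, 1 ≤ l i)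
    (β : (i : Fin m) → Fin (l i + 1) → (Fin n → K)) (hβ0 : ∀ i, β i 0 = 0) :
    (Matrix.of fun (i : Fin m) (t : Fin n) =>
        algebraMap (MvPolynomial ((i : Fin m) × Fin (l i + 1)) K)
          (FractionRing (MvPolynomial ((i : Fin m) × Fin (l i + 1)) K))
          (∑ k : Fin (l i + 1), X ⟨i, k⟩ * C (β i k t))).rank =
      Finset.univ.sup (fun ks : ((i : Fin m) → Fin (l i)) =>
        (Matrix.of fun (i : Fin m) (t : Fin n) => β i ((ks i).succ) t).rank) := by
  set P := MvPolynomial ((i : Fin m) × Fin (l i + 1)) K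
  set φ := algebraMap P (FractionRing P)
  set generic : Matrix (Fin m) (Fin n) P := .of fun i t => ∑ k, X ⟨i, k⟩ * C (β i k t)
  have : ∀ i, Nonempty (Fin (l i)) := fun i => ⟨⟨0, hl i⟩⟩
  change (generic.map φ).rank = _
  apply le_antisymm
  · have hsum : generic.map φ = .of fun i t =>
        ∑ k : Fin (l i), φ (X ⟨i, k.succ⟩) * (φ.comp C) (β i k.succ t) := by
      ext i t
      simp [generic, Fin.sum_univ_succ, hβ0]
    rw [hsum]
    refine (Matrix.rank_of_sum_mul_rows_le_sup _ _).trans (Finset.sup_mono_fun fun ks _ => ?_)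
    exact Matrix.rank_map_le_rank_map (.of fun i t => β i (ks i).succ t) (φ.comp C)
      (RingHom.id K) Function.injective_id
  · refine Finset.sup_le fun ks _ => ?_
    have hspec : (Matrix.of fun i t => β i (ks i).succ t) =
        generic.map (eval fun x => if x.2 = (ks x.1).succ then 1 else 0) := by
      ext i t
      simp [generic]
    rw [hspec]
    exact Matrix.rank_map_le_rank_map _ _ _ (IsFractionRing.injective P (FractionRing P))
end
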